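/- Let Ω be a bounded domain in ℂⁿ, let 1 ≤ p < ∞, and let a ∈ Ω. Then K_p(a) = 1/λ(Ω) if and only if f(a) = (1/λ(Ω))·∫_Ω f dλ for every f ∈ A^p(Ω) (the Bochner integral of f over Ω exists since Ω is bounded and p ≥ 1). -/

import Mathlib

open MeasureTheory Metric Complex Filter
open scoped ENNReal NNReal

noncomputable section

lemma rpow_sub_rpow_le_aux {p x y : ℝ} (hp : 1 ≤ p) (hy : 0 ≤ y) (hyx : y ≤ x) :
    x ^ p - y ^ p ≤ p * x ^ (p - 1) * (x - y) := by
  have hx : 0 ≤ x := hy.trans hyx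
  rcases eq_or_lt_of_le hx with h0 | hx0
  · have : x = 0 := h0.symm
    subst this
    have : y = 0 := le_antisymm hyx hy
    simp [this, Real.zero_rpow (by positivity : p ≠ 0)]
  · set u : ℝ := y / x with hu
    have hu0 : 0 ≤ u := div_nonneg hy hx
    have hu1 : u ≤ 1 := (div_le_one hx0).2 hyx
    have hber : 1 + p * (u - 1) ≤ (1 + (u - 1)) ^ p :=
      one_add_mul_self_le_rpow_one_add (by linarith) hp
    have huu : (1 + (u - 1)) = u := by ring
    rw [huu] at hber
    -- x^p * (1 + p*(u-1)) ≤ x^p * u^p = y^p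
    have hxp : (0:ℝ) < x ^ p := Real.rpow_pos_of_pos hx0 p
    have h1 : x ^ p * (1 + p * (u - 1)) ≤ x ^ p * u ^ p :=
      mul_le_mul_of_nonneg_left hber hxp.le
    have h2 : x ^ p * u ^ p = y ^ p := by
      rw [hu, ← Real.mul_rpow hx (div_nonneg hy hx), mul_div_cancel₀ _ hx0.ne']
    have h3 : x ^ p * (u - 1) = - (x ^ (p - 1) * (x - y)) := by
      have : x ^ p = x ^ (p - 1) * x := by
        rw [← Real.rpow_add_one hx0.ne' (p-1)]; ring_nf
      rw [this, hu]; field_simp; ring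
    nlinarith [h1, h2, h3]

lemma rpow_sub_rpow_le {p M x y : ℝ} (hp : 1 ≤ p) (hx : 0 ≤ x) (hy : 0 ≤ y)
    (hxM : x ≤ M) (hyM : y ≤ M) : |x ^ p - y ^ p| ≤ p * M ^ (p - 1) * |x - y| := by
  have hM : 0 ≤ M := hx.trans hxM
  have key : ∀ a b : ℝ, 0 ≤ a → 0 ≤ b → b ≤ a → a ≤ M →
      a ^ p - b ^ p ≤ p * M ^ (p - 1) * (a - b) := by
    intro a b ha hb hba haM
    have : a ^ (p - 1) ≤ M ^ (p - 1) :=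
      Real.rpow_le_rpow ha haM (by linarith)
    have hp0 : (0:ℝ) < p := by linarith
    calc a ^ p - b ^ p ≤ p * a ^ (p - 1) * (a - b) := rpow_sub_rpow_le_aux hp hb hba
      _ ≤ p * M ^ (p - 1) * (a - b) :=
        mul_le_mul_of_nonneg_right (mul_le_mul_of_nonneg_left this hp0.le) (sub_nonneg.2 hba)
  rcases le_total y x with h | h
  · rw [_root_.abs_of_nonneg (sub_nonneg.2 (Real.rpow_le_rpow hy h (by positivity))), _root_.abs_of_nonneg (sub_nonneg.2 h)]
    exact key x y hx hy h hxM
  · rw [_root_.abs_of_nonpos (sub_nonpos.2 (Real.rpow_le_rpow hx h (by positivity))), _root_.abs_of_nonpos (sub_nonpos.2 h),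
      neg_sub, neg_sub]
    exact key y x hy hx h hyM

lemma hasDerivAt_one_add_mul_norm_rpow (w : ℂ) {p : ℝ} (hp : 1 ≤ p) :
    HasDerivAt (fun t : ℝ => ‖1 + (t:ℂ) * w‖ ^ p) (p * w.re) 0 := by
  set q : ℝ → ℝ := fun t => 1 + 2 * w.re * t + Complex.normSq w * t ^ 2 with hqdef
  have hq : ∀ t : ℝ, ‖1 + (t:ℂ) * w‖ ^ p = q t ^ (p / 2) := by
    intro t
    have h1 : Complex.normSq (1 + (t:ℂ) * w) = q t := by
      simp [Complex.normSq_apply, Complex.add_re, Complex.add_im, Complex.mul_re,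
        Complex.mul_im, hqdef]
      ring
    have h2 : ‖1 + (t:ℂ) * w‖ = Complex.normSq (1 + (t:ℂ) * w) ^ (1/2 : ℝ) := by
      rw [Complex.norm_def, Real.sqrt_eq_rpow]
    rw [h2, ← Real.rpow_mul (Complex.normSq_nonneg _), h1]
    ring_nf
  have hq' : HasDerivAt q (2 * w.re) 0 := by
    have h1 : HasDerivAt (fun t : ℝ => 2 * w.re * t) (2 * w.re) 0 :=
      (hasDerivAt_id (0:ℝ)).const_mul (2 * w.re) |>.congr_deriv (by ring)
    have h2 : HasDerivAt (fun t : ℝ => Complex.normSq w * t ^ 2) 0 0 := by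
      simpa using (hasDerivAt_pow 2 (0:ℝ)).const_mul (Complex.normSq w)
    have := (h1.const_add 1).add h2
    rw [add_zero] at this
    exact this
  have houter : HasDerivAt (fun x : ℝ => x ^ (p/2)) (p/2) 1 := by
    simpa using Real.hasDerivAt_rpow_const (x := 1) (p := p/2) (Or.inl one_ne_zero)
  have hq0 : q 0 = 1 := by simp [hqdef]
  have hcomp : HasDerivAt (fun t : ℝ => q t ^ (p/2)) (p/2 * (2 * w.re)) 0 := by
    exact (hq0.symm ▸ houter).comp 0 hq'
  have : HasDerivAt (fun t : ℝ => ‖1 + (t:ℂ) * w‖ ^ p) (p/2 * (2 * w.re)) 0 := by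
    exact hcomp.congr_of_eventuallyEq (Eventually.of_forall hq)
  convert this using 1
  ring

/-- Lebesgue measure on `ℂⁿ` (with the Euclidean metric). -/
noncomputable instance {n : ℕ} : MeasureSpace (EuclideanSpace ℂ (Fin n)) :=
  ⟨Measure.map (MeasurableEquiv.toLp 2 (Fin n → ℂ)) (volume : Measure (Fin n → ℂ))⟩

instance {n : ℕ} : (volume : Measure (EuclideanSpace ℂ (Fin n))).IsOpenPosMeasure := by
  show (Measure.map (MeasurableEquiv.toLp 2 (Fin n → ℂ)) (volume : Measure (Fin n → ℂ))).IsOpenPosMeasure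
  exact Continuous.isOpenPosMeasure_map (PiLp.homeomorph 2 (fun _ : Fin n => ℂ)).symm.continuous
    (MeasurableEquiv.toLp 2 (Fin n → ℂ)).surjective

instance {n : ℕ} : IsFiniteMeasureOnCompacts (volume : Measure (EuclideanSpace ℂ (Fin n))) := by
  show IsFiniteMeasureOnCompacts
    (Measure.map (MeasurableEquiv.toLp 2 (Fin n → ℂ)) (volume : Measure (Fin n → ℂ)))
  exact Measure.IsFiniteMeasureOnCompacts.map _ (PiLp.homeomorph 2 (fun _ : Fin n => ℂ)).symm

/-- Membership in the `p`-Bergman space `A^p(Ω)`: `f` is holomorphic on `Ω` with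
`∫_Ω |f|^p dλ < ∞`. -/
def MemAp {n : ℕ} (Ω : Set (EuclideanSpace ℂ (Fin n))) (p : ℝ)
    (f : EuclideanSpace ℂ (Fin n) → ℂ) : Prop :=
  DifferentiableOn ℂ f Ω ∧
    (∫⁻ ζ in Ω, ENNReal.ofReal (‖f ζ‖ ^ p)) < ⊤

/-- The `p`-Bergman kernel
`K_p(z) = sup { |f(z)|^p / ∫_Ω |f|^p : f ∈ A^p(Ω), f ≢ 0 }`. -/
def bergmanK {n : ℕ} (Ω : Set (EuclideanSpace ℂ (Fin n))) (p : ℝ)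
    (z : EuclideanSpace ℂ (Fin n)) : ℝ :=
  sSup { t : ℝ | ∃ f, MemAp Ω p f ∧ (∃ ζ ∈ Ω, f ζ ≠ 0) ∧
    t = ‖f z‖ ^ p / ∫ ζ in Ω, ‖f ζ‖ ^ p }

/-- `m` is a minimizer of `∫_Ω |f|^p` among `f ∈ A^p(Ω)` with `f z = 1`;
for `1 ≤ p < ∞` the minimizer is unique and denoted `m_p(·,z)`. -/
def IsMinimizer {n : ℕ} (Ω : Set (EuclideanSpace ℂ (Fin n))) (p : ℝ)
    (z : EuclideanSpace ℂ (Fin n)) (m : EuclideanSpace ℂ (Fin n) → ℂ) : Prop :=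
  MemAp Ω p m ∧ m z = 1 ∧
    ∀ f, MemAp Ω p f → f z = 1 →
      (∫ ζ in Ω, ‖m ζ‖ ^ p) ≤ ∫ ζ in Ω, ‖f ζ‖ ^ p

section Bridge

variable {n : ℕ} {Ω : Set (EuclideanSpace ℂ (Fin n))} {p : ℝ}
  {f : EuclideanSpace ℂ (Fin n) → ℂ}

lemma memAp_iff_memℒp (hΩo : IsOpen Ω) (hp : 0 < p) (hd : DifferentiableOn ℂ f Ω) :
    MemAp Ω p f ↔ MemLp f (ENNReal.ofReal p) (volume.restrict Ω) := by
  have haesm : AEStronglyMeasurable f (volume.restrict Ω) :=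
    hd.continuousOn.aestronglyMeasurable hΩo.measurableSet
  have hofreal : ∀ z : ℂ, ENNReal.ofReal (‖z‖ ^ p) = (‖z‖₊ : ℝ≥0∞) ^ p := by
    intro z
    rw [← ENNReal.ofReal_rpow_of_nonneg (norm_nonneg z) hp.le,
      ofReal_norm, enorm_eq_nnnorm]
  constructor
  · rintro ⟨-, hint⟩
    refine ⟨haesm, ?_⟩
    rw [eLpNorm_lt_top_iff_lintegral_rpow_enorm_lt_top
      (ENNReal.ofReal_pos.2 hp).ne' ENNReal.ofReal_ne_top, ENNReal.toReal_ofReal hp.le]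
    simpa [hofreal, ← enorm_eq_nnnorm] using hint
  · rintro ⟨-, hsn⟩
    refine ⟨hd, ?_⟩
    rw [eLpNorm_lt_top_iff_lintegral_rpow_enorm_lt_top
      (ENNReal.ofReal_pos.2 hp).ne' ENNReal.ofReal_ne_top, ENNReal.toReal_ofReal hp.le] at hsn
    simpa [hofreal, ← enorm_eq_nnnorm] using hsn

lemma MemAp.integrableOn_rpow (hΩo : IsOpen Ω) (hp : 0 < p) (hf : MemAp Ω p f) :
    IntegrableOn (fun ζ => ‖f ζ‖ ^ p) Ω := by
  have hcont : ContinuousOn (fun ζ => ‖f ζ‖ ^ p) Ω :=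
    (hf.1.continuousOn.norm).rpow_const (fun x _ => Or.inr hp.le)
  refine ⟨hcont.aestronglyMeasurable hΩo.measurableSet, ?_⟩
  rw [hasFiniteIntegral_iff_ofReal (Eventually.of_forall fun ζ => by positivity)]
  simpa using hf.2

lemma MemAp.integrableOn (hΩo : IsOpen Ω) (hΩb : Bornology.IsBounded Ω) (hp : 1 ≤ p)
    (hf : MemAp Ω p f) : IntegrableOn f Ω := by
  haveI : IsFiniteMeasure (volume.restrict Ω) :=
    ⟨by simpa [Measure.restrict_apply_univ] using hΩb.measure_lt_top⟩
  exact ((memAp_iff_memℒp hΩo (by linarith) hf.1).1 hf).integrable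
    (by simpa using ENNReal.one_le_ofReal.2 hp)

lemma setIntegral_pos_of_continuousOn {G : EuclideanSpace ℂ (Fin n) → ℝ}
    (hΩo : IsOpen Ω) {b : EuclideanSpace ℂ (Fin n)} (hb : b ∈ Ω)
    (hG : ContinuousOn G Ω) (hGi : IntegrableOn G Ω)
    (hnn : ∀ ζ, 0 ≤ G ζ) (haG : 0 < G b) : 0 < ∫ ζ in Ω, G ζ := by
  rw [setIntegral_pos_iff_support_of_nonneg_ae (Eventually.of_forall hnn) hGi]
  have hca : ContinuousAt G b := hG.continuousAt (hΩo.mem_nhds hb)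
  have hmem : G ⁻¹' Set.Ioi 0 ∩ Ω ∈ nhds b :=
    Filter.inter_mem (hca.preimage_mem_nhds (Ioi_mem_nhds haG)) (hΩo.mem_nhds hb)
  obtain ⟨ε, hε, hball⟩ := Metric.mem_nhds_iff.1 hmem
  calc (0:ENNReal) < volume (ball b ε) := Metric.measure_ball_pos volume b hε
    _ ≤ volume (Function.support G ∩ Ω) := by
        refine measure_mono fun ζ hζ => ?_
        obtain ⟨h1, h2⟩ := hball hζ
        exact ⟨ne_of_gt h1, h2⟩

end Bridge

section Holder

variable {n : ℕ} {Ω : Set (EuclideanSpace ℂ (Fin n))} {p : ℝ}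
  {f : EuclideanSpace ℂ (Fin n) → ℂ}

lemma holder_bound (hΩo : IsOpen Ω) (hΩb : Bornology.IsBounded Ω) (hp : 1 ≤ p)
    (hf : MemAp Ω p f) :
    ∫ ζ in Ω, ‖f ζ‖ ≤ (∫ ζ in Ω, ‖f ζ‖ ^ p) ^ (1/p) * (volume Ω).toReal ^ (1 - 1/p) := by
  haveI : IsFiniteMeasure (volume.restrict Ω) :=
    ⟨by simpa [Measure.restrict_apply_univ] using hΩb.measure_lt_top⟩
  have hInn : 0 ≤ ∫ ζ in Ω, ‖f ζ‖ ^ p :=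
    integral_nonneg (fun ζ => by positivity)
  rcases eq_or_lt_of_le hp with h1 | h1
  · rw [← h1]
    simp [Real.rpow_one]
  · have hpq : p.HolderConjugate (p / (p - 1)) := Real.HolderConjugate.conjExponent h1
    have hmem : MemLp (fun ζ => ‖f ζ‖) (ENNReal.ofReal p) (volume.restrict Ω) :=
      ((memAp_iff_memℒp hΩo (by linarith) hf.1).1 hf).norm
    have hone : MemLp (fun _ : EuclideanSpace ℂ (Fin n) => (1:ℝ))
        (ENNReal.ofReal (p / (p - 1))) (volume.restrict Ω) := memLp_const 1
    have := integral_mul_le_Lp_mul_Lq_of_nonneg (μ := volume.restrict Ω) hpq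
      (Eventually.of_forall fun ζ => norm_nonneg (f ζ))
      (Eventually.of_forall fun _ => zero_le_one) hmem hone
    simp only [mul_one, Real.one_rpow] at this
    rw [integral_const, measureReal_restrict_apply_univ, measureReal_def, smul_eq_mul, mul_one] at this
    refine this.trans ?_
    have : 1 / (p / (p - 1)) = 1 - 1/p := by
      rw [one_div, ← hpq.one_sub_inv, one_div]
    rw [this]

end Holder

section ElementBound

variable {n : ℕ} {Ω : Set (EuclideanSpace ℂ (Fin n))} {p : ℝ}
  {f : EuclideanSpace ℂ (Fin n) → ℂ}

lemma element_le (hΩo : IsOpen Ω) (hΩb : Bornology.IsBounded Ω) (hp : 1 ≤ p)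
    {a : EuclideanSpace ℂ (Fin n)} (hf : MemAp Ω p f)
    (hV : 0 < (volume Ω).toReal)
    (hmv : f a = (((volume Ω).toReal : ℂ))⁻¹ * ∫ ζ in Ω, f ζ) :
    ‖f a‖ ^ p / (∫ ζ in Ω, ‖f ζ‖ ^ p) ≤ 1 / (volume Ω).toReal := by
  have habsnorm : (fun ζ => ‖f ζ‖ ^ p) = fun ζ => ‖f ζ‖ ^ p := by
    funext ζ; rfl
  rw [habsnorm]
  set V := (volume Ω).toReal with hVdef
  set I := ∫ ζ in Ω, ‖f ζ‖ ^ p with hIdef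
  have hI : 0 ≤ I := integral_nonneg (fun ζ => by positivity)
  rcases eq_or_lt_of_le hI with hI0 | hIpos
  · rw [← hI0, div_zero]
    positivity
  · have hp0 : (0:ℝ) < p := by linarith
    have habs : ‖f a‖ ≤ (I / V) ^ (1/p) := by
      have h1 : ‖f a‖ = V⁻¹ * ‖∫ ζ in Ω, f ζ‖ := by
        rw [hmv, norm_mul, norm_inv, Complex.norm_real, Real.norm_of_nonneg hV.le]
      have h2 : ‖∫ ζ in Ω, f ζ‖ ≤ ∫ ζ in Ω, ‖f ζ‖ := norm_integral_le_integral_norm f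
      have h3 := holder_bound hΩo hΩb hp hf
      have h4 : ‖f a‖ ≤ V⁻¹ * (I ^ (1/p) * V ^ (1 - 1/p)) := by
        rw [h1]
        exact mul_le_mul_of_nonneg_left (h2.trans h3) (by positivity)
      refine h4.trans_eq ?_
      rw [Real.div_rpow hI hV.le]
      rw [show V⁻¹ * (I ^ (1/p) * V ^ (1 - 1/p)) = I ^ (1/p) * (V ^ (-1:ℝ) * V ^ (1 - 1/p)) by
        rw [Real.rpow_neg_one]; ring]
      rw [← Real.rpow_add hV, show (-1 + (1 - 1/p) : ℝ) = -(1/p) by ring,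
        Real.rpow_neg hV.le]
      ring
    have hfa : ‖f a‖ ^ p ≤ I / V := by
      have := Real.rpow_le_rpow (norm_nonneg (f a)) habs hp0.le
      rwa [← Real.rpow_mul (by positivity), one_div_mul_cancel hp0.ne',
        Real.rpow_one] at this
    calc ‖f a‖ ^ p / I ≤ (I / V) / I := by gcongr
      _ = 1 / V := by
          field_simp

lemma hasDerivAt_F (hΩo : IsOpen Ω) (hΩb : Bornology.IsBounded Ω) (hp : 1 ≤ p)
    {h : EuclideanSpace ℂ (Fin n) → ℂ} (hh : MemAp Ω p h) (hhi : IntegrableOn h Ω) :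
    HasDerivAt (fun t : ℝ => ∫ ζ in Ω, ‖1 + (t:ℂ) * h ζ‖ ^ p)
      (p * (∫ ζ in Ω, h ζ).re) 0 := by
  haveI : IsFiniteMeasure (volume.restrict Ω) :=
    ⟨by simpa [Measure.restrict_apply_univ] using hΩb.measure_lt_top⟩
  have hp0 : (0:ℝ) < p := by linarith
  have hcont : ContinuousOn h Ω := hh.1.continuousOn
  have key := hasDerivAt_integral_of_dominated_loc_of_lip
    (μ := volume.restrict Ω)
    (F := fun (x : ℝ) ζ => ‖1 + (x:ℂ) * h ζ‖ ^ p)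
    (F' := fun ζ => p * (h ζ).re)
    (x₀ := 0)
    (bound := fun ζ => p * ((1 + ‖h ζ‖) ^ (p-1) * ‖h ζ‖))
    (s := ball 0 1) (ball_mem_nhds 0 one_pos)
    (Eventually.of_forall fun x => by
      have : ContinuousOn (fun ζ => ‖1 + (x:ℂ) * h ζ‖ ^ p) Ω :=
        ((continuousOn_const.add (continuousOn_const.mul hcont)).norm).rpow_const
          (fun ζ _ => Or.inr hp0.le)
      exact this.aestronglyMeasurable hΩo.measurableSet)
    (by
      have heq : (fun ζ => ‖1 + ((0:ℝ):ℂ) * h ζ‖ ^ p)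
          = fun _ : EuclideanSpace ℂ (Fin n) => (1:ℝ) := by
        funext ζ; simp [Real.one_rpow]
      show Integrable (fun ζ => ‖1 + ((0:ℝ):ℂ) * h ζ‖ ^ p) (volume.restrict Ω)
      rw [heq]
      exact integrable_const 1)
    (by
      have : ContinuousOn (fun ζ => p * (h ζ).re) Ω :=
        continuousOn_const.mul (Complex.continuous_re.comp_continuousOn hcont)
      exact this.aestronglyMeasurable hΩo.measurableSet)
    (Eventually.of_forall fun ζ => by
      apply LipschitzOnWith.of_dist_le_mul
      intro x hx y hy
      rw [Real.dist_eq, Real.dist_eq]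
      have hbnd : ∀ z : ℝ, z ∈ ball (0:ℝ) 1 → ‖1 + (z:ℂ) * h ζ‖ ≤ 1 + ‖h ζ‖ := by
        intro z hz
        rw [mem_ball, dist_zero_right, Real.norm_eq_abs] at hz
        calc ‖1 + (z:ℂ) * h ζ‖ ≤ ‖(1:ℂ)‖ + ‖(z:ℂ) * h ζ‖ := norm_add_le _ _
          _ = 1 + |z| * ‖h ζ‖ := by
              rw [norm_one, norm_mul, Complex.norm_real, Real.norm_eq_abs]
          _ ≤ 1 + 1 * ‖h ζ‖ := by
              have := mul_le_mul_of_nonneg_right hz.le (norm_nonneg (h ζ))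
              linarith
          _ = 1 + ‖h ζ‖ := by ring
      have hlip := rpow_sub_rpow_le (M := 1 + ‖h ζ‖) hp (norm_nonneg _) (norm_nonneg _)
        (hbnd x hx) (hbnd y hy)
      have hnorm : |‖1 + (x:ℂ) * h ζ‖ - ‖1 + (y:ℂ) * h ζ‖| ≤ |x - y| * ‖h ζ‖ := by
        calc |‖1 + (x:ℂ) * h ζ‖ - ‖1 + (y:ℂ) * h ζ‖|
            ≤ ‖(1 + (x:ℂ) * h ζ) - (1 + (y:ℂ) * h ζ)‖ := abs_norm_sub_norm_le _ _
          _ = ‖((x:ℂ) - (y:ℂ)) * h ζ‖ := by ring_nf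
          _ = |x - y| * ‖h ζ‖ := by
              rw [norm_mul, ← Complex.ofReal_sub, Complex.norm_real, Real.norm_eq_abs]
      have hcoe : ((Real.nnabs (p * ((1 + ‖h ζ‖) ^ (p-1) * ‖h ζ‖)) : ℝ≥0) : ℝ)
          = p * ((1 + ‖h ζ‖) ^ (p-1) * ‖h ζ‖) := by
        rw [Real.coe_nnabs, _root_.abs_of_nonneg (by positivity)]
      rw [hcoe]
      calc |‖1 + (x:ℂ) * h ζ‖ ^ p - ‖1 + (y:ℂ) * h ζ‖ ^ p|
          ≤ p * (1 + ‖h ζ‖) ^ (p-1) * |‖1 + (x:ℂ) * h ζ‖ - ‖1 + (y:ℂ) * h ζ‖| := hlip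
        _ ≤ p * (1 + ‖h ζ‖) ^ (p-1) * (|x - y| * ‖h ζ‖) := by
            exact mul_le_mul_of_nonneg_left hnorm (by positivity)
        _ = p * ((1 + ‖h ζ‖) ^ (p-1) * ‖h ζ‖) * |x - y| := by ring)
    (by
      -- bound integrable
      have hL1 : IntegrableOn (fun ζ => ‖h ζ‖ ^ p) Ω := hh.integrableOn_rpow hΩo hp0
      have hdom : Integrable (fun ζ => p * (2 ^ p * (1 + ‖h ζ‖ ^ p))) (volume.restrict Ω) :=
        (((integrable_const (1:ℝ)).add hL1).const_mul _).const_mul _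
      refine hdom.mono' ?_ (Eventually.of_forall fun ζ => ?_)
      · have : ContinuousOn (fun ζ => p * ((1 + ‖h ζ‖) ^ (p-1) * ‖h ζ‖)) Ω := by
          apply continuousOn_const.mul
          apply ContinuousOn.mul ?_ hcont.norm
          exact (continuousOn_const.add hcont.norm).rpow_const
            (fun ζ _ => Or.inr (by linarith))
        exact this.aestronglyMeasurable hΩo.measurableSet
      · rw [Real.norm_eq_abs, _root_.abs_of_nonneg (by positivity)]
        have h1 : (1 + ‖h ζ‖) ^ (p-1) * ‖h ζ‖ ≤ (1 + ‖h ζ‖) ^ (p-1) * (1 + ‖h ζ‖) := by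
          apply mul_le_mul_of_nonneg_left _ (by positivity)
          linarith [norm_nonneg (h ζ)]
        have h2 : (1 + ‖h ζ‖) ^ (p-1) * (1 + ‖h ζ‖) = (1 + ‖h ζ‖) ^ p := by
          rw [← Real.rpow_add_one (by positivity : (1:ℝ) + ‖h ζ‖ ≠ 0) (p-1)]
          ring_nf
        have h3 : (1 + ‖h ζ‖) ^ p ≤ 2 ^ p * (1 + ‖h ζ‖ ^ p) := by
          rcases le_total (‖h ζ‖) 1 with hc | hc
          · have : (1 + ‖h ζ‖) ^ p ≤ (2:ℝ) ^ p :=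
              Real.rpow_le_rpow (by positivity) (by linarith) hp0.le
            have h4 : (2:ℝ) ^ p * 1 ≤ 2 ^ p * (1 + ‖h ζ‖ ^ p) := by
              apply mul_le_mul_of_nonneg_left _ (by positivity)
              have : 0 ≤ ‖h ζ‖ ^ p := by positivity
              linarith
            linarith
          · have : (1 + ‖h ζ‖) ^ p ≤ (2 * ‖h ζ‖) ^ p :=
              Real.rpow_le_rpow (by positivity) (by linarith) hp0.le
            rw [Real.mul_rpow (by norm_num) (norm_nonneg _)] at this
            have h4 : (2:ℝ) ^ p * ‖h ζ‖ ^ p ≤ 2 ^ p * (1 + ‖h ζ‖ ^ p) := by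
              apply mul_le_mul_of_nonneg_left _ (by positivity)
              linarith
            linarith
        calc p * ((1 + ‖h ζ‖) ^ (p-1) * ‖h ζ‖) ≤ p * (1 + ‖h ζ‖) ^ p := by
              rw [← h2]; exact mul_le_mul_of_nonneg_left h1 hp0.le
          _ ≤ p * (2 ^ p * (1 + ‖h ζ‖ ^ p)) :=
              mul_le_mul_of_nonneg_left h3 hp0.le)
    (Eventually.of_forall fun ζ => hasDerivAt_one_add_mul_norm_rpow (h ζ) hp)
  have h2 := key.2
  have h3 : (∫ ζ in Ω, (h ζ).re) = (∫ ζ in Ω, h ζ).re := by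
    simpa [RCLike.re_to_complex] using integral_re (𝕜 := ℂ) hhi
  rwa [integral_const_mul, h3] at h2

end ElementBound

/-- For a bounded domain `Ω ⊂ ℂⁿ`, `1 ≤ p < ∞` and `a ∈ Ω`:
`K_p(a) = 1/λ(Ω)` iff every `f ∈ A^p(Ω)` has the mean-value property
`f(a) = λ(Ω)⁻¹ ∫_Ω f`. -/
theorem kernel_min_iff_meanValue {n : ℕ} (Ω : Set (EuclideanSpace ℂ (Fin n)))
    (hΩo : IsOpen Ω) (hΩc : IsConnected Ω) (hΩb : Bornology.IsBounded Ω)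
    (p : ℝ) (hp : 1 ≤ p) (a : EuclideanSpace ℂ (Fin n)) (ha : a ∈ Ω) :
    bergmanK Ω p a = 1 / (volume Ω).toReal ↔
      ∀ f : EuclideanSpace ℂ (Fin n) → ℂ, MemAp Ω p f →
        f a = (((volume Ω).toReal : ℂ))⁻¹ * ∫ ζ in Ω, f ζ := by
  haveI hfin : IsFiniteMeasure (volume.restrict Ω) :=
    ⟨by simpa [Measure.restrict_apply_univ] using hΩb.measure_lt_top⟩
  have hp0 : (0:ℝ) < p := by linarith
  have hV : 0 < (volume Ω).toReal :=
    ENNReal.toReal_pos (hΩo.measure_pos volume hΩc.nonempty).ne' hΩb.measure_lt_top.ne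
  set V : ℝ := (volume Ω).toReal with hVdef
  set S : Set ℝ := { t : ℝ | ∃ f, MemAp Ω p f ∧ (∃ ζ ∈ Ω, f ζ ≠ 0) ∧
    t = ‖f a‖ ^ p / ∫ ζ in Ω, ‖f ζ‖ ^ p } with hS
  have hSK : bergmanK Ω p a = sSup S := rfl
  have honemem : 1 / V ∈ S := by
    refine ⟨fun _ => 1, ⟨differentiableOn_const 1, ?_⟩, ⟨a, ha, one_ne_zero⟩, ?_⟩
    · simp only [norm_one, Real.one_rpow, ENNReal.ofReal_one, lintegral_const, one_mul,
        Measure.restrict_apply_univ]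
      exact hΩb.measure_lt_top
    · simp only [norm_one, Real.one_rpow, integral_const, measureReal_def, Measure.restrict_apply_univ,
        smul_eq_mul, mul_one, hVdef, one_div]
  constructor
  · -- forward direction
    intro hK f hf
    have hfi : IntegrableOn f Ω := hf.integrableOn hΩo hΩb hp
    set c : ℂ := ((V:ℂ))⁻¹ * ∫ ζ in Ω, f ζ with hc
    set g : EuclideanSpace ℂ (Fin n) → ℂ := fun ζ => f ζ - c with hgdef
    have hgd : DifferentiableOn ℂ g Ω := hf.1.sub (differentiableOn_const c)
    have hgl : MemLp g (ENNReal.ofReal p) (volume.restrict Ω) :=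
      ((memAp_iff_memℒp hΩo hp0 hf.1).1 hf).sub (memLp_const c)
    have hgA : MemAp Ω p g := (memAp_iff_memℒp hΩo hp0 hgd).2 hgl
    have hconsti : IntegrableOn (fun _ => c) Ω := integrableOn_const hΩb.measure_lt_top.ne
    have hgi : IntegrableOn g Ω := hfi.sub hconsti
    have hVC : ((V:ℂ)) ≠ 0 := by exact_mod_cast hV.ne'
    have hgint : ∫ ζ in Ω, g ζ = 0 := by
      rw [hgdef]
      rw [integral_sub hfi hconsti, integral_const, measureReal_restrict_apply_univ, measureReal_def, ← hVdef, hc]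
      rw [Complex.real_smul]
      field_simp
      ring
    suffices hga : g a = 0 by
      have : f a - c = 0 := hga
      rw [sub_eq_zero] at this
      exact this
    by_contra hga
    have hub : BddAbove S := by
      by_contra hnb
      rw [hSK, Real.sSup_of_not_bddAbove hnb] at hK
      have h01 : (0:ℝ) < 1 / V := by positivity
      rw [← hK] at h01
      exact lt_irrefl 0 h01
    set r : ℝ := ‖g a‖ with hrdef
    have hrpos : 0 < r := norm_pos_iff.2 hga
    set u : ℂ := (starRingEnd ℂ) (g a) / (r:ℂ) with hu
    set h : EuclideanSpace ℂ (Fin n) → ℂ := fun ζ => u * g ζ with hhdef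
    have hha : h a = (r:ℂ) := by
      rw [hhdef]
      show u * g a = (r:ℂ)
      rw [hu, div_mul_eq_mul_div, mul_comm, Complex.mul_conj]
      rw [Complex.normSq_eq_norm_sq, ← hrdef]
      rw [div_eq_iff (by exact_mod_cast hrpos.ne')]
      push_cast
      ring
    have hhd : DifferentiableOn ℂ h Ω := hgd.const_mul u
    have hhl : MemLp h (ENNReal.ofReal p) (volume.restrict Ω) := hgl.const_mul u
    have hhA : MemAp Ω p h := (memAp_iff_memℒp hΩo hp0 hhd).2 hhl
    have hhi : IntegrableOn h Ω := hgi.const_mul u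
    have hhint : ∫ ζ in Ω, h ζ = 0 := by
      rw [hhdef]
      show ∫ ζ in Ω, u * g ζ = 0
      rw [integral_const_mul, hgint, mul_zero]
    have hhcont : ContinuousOn h Ω := hhd.continuousOn
    set F : ℝ → ℝ := fun t => ∫ ζ in Ω, ‖1 + (t:ℂ) * h ζ‖ ^ p with hFdef
    have hFderiv : HasDerivAt F 0 0 := by
      have := hasDerivAt_F hΩo hΩb hp hhA hhi
      rw [hhint] at this
      simpa using this
    have hF0 : F 0 = V := by
      have heq : (fun ζ => ‖1 + ((0:ℝ):ℂ) * h ζ‖ ^ p)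
          = fun _ : EuclideanSpace ℂ (Fin n) => (1:ℝ) := by
        funext ζ; simp [Real.one_rpow]
      rw [hFdef]
      show (∫ ζ in Ω, ‖1 + ((0:ℝ):ℂ) * h ζ‖ ^ p) = V
      rw [heq, integral_const, measureReal_restrict_apply_univ, measureReal_def, smul_eq_mul, mul_one]
    have hkey : ∀ t : ℝ, 0 < t → V * (1 + t * r) ^ p ≤ F t := by
      intro t ht
      set φ : EuclideanSpace ℂ (Fin n) → ℂ := fun ζ => 1 + (t:ℂ) * h ζ with hφdef
      have hφd : DifferentiableOn ℂ φ Ω :=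
        (differentiableOn_const 1).add (hhd.const_mul (t:ℂ))
      have hφl : MemLp φ (ENNReal.ofReal p) (volume.restrict Ω) :=
        (memLp_const (1:ℂ)).add (hhl.const_mul (t:ℂ))
      have hφA : MemAp Ω p φ := (memAp_iff_memℒp hΩo hp0 hφd).2 hφl
      have hφa : φ a = ((1 + t * r : ℝ) : ℂ) := by
        rw [hφdef]
        show 1 + (t:ℂ) * h a = ((1 + t * r : ℝ) : ℂ)
        rw [hha]
        norm_cast
      have hφane : φ a ≠ 0 := by
        rw [hφa]
        exact_mod_cast (by positivity : (1 + t * r : ℝ) ≠ 0)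
      have habsφ : ‖φ a‖ = 1 + t * r := by
        rw [hφa, Complex.norm_real, Real.norm_eq_abs, _root_.abs_of_pos (by positivity)]
      have hFt : F t = ∫ ζ in Ω, ‖φ ζ‖ ^ p := rfl
      have hφcont : ContinuousOn (fun ζ => ‖φ ζ‖ ^ p) Ω :=
        (hφd.continuousOn.norm).rpow_const (fun ζ _ => Or.inr hp0.le)
      have hFtpos : 0 < F t := by
        rw [hFt]
        show (0:ℝ) < ∫ ζ in Ω, ‖φ ζ‖ ^ p
        refine setIntegral_pos_of_continuousOn hΩo ha hφcont
          (hφA.integrableOn_rpow hΩo hp0) (fun ζ => by positivity) ?_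
        have : 0 < ‖φ a‖ := norm_pos_iff.2 hφane
        positivity
      have hmem : ‖φ a‖ ^ p / (∫ ζ in Ω, ‖φ ζ‖ ^ p) ∈ S :=
        ⟨φ, hφA, ⟨a, ha, hφane⟩, rfl⟩
      have hle : ‖φ a‖ ^ p / (∫ ζ in Ω, ‖φ ζ‖ ^ p) ≤ 1 / V := by
        rw [← hK, hSK]
        exact le_csSup hub hmem
      rw [habsφ, ← hFt, div_le_div_iff₀ hFtpos hV] at hle
      linarith
    have hslope : Tendsto (slope F 0) (nhdsWithin 0 (Set.Ioi 0)) (nhds 0) :=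
      (hasDerivAt_iff_tendsto_slope.1 hFderiv).mono_left
        (nhdsWithin_mono 0 (fun x hx => ne_of_gt hx))
    have hVpr : (0:ℝ) < V * p * r := by positivity
    have hev : ∀ᶠ t in nhdsWithin 0 (Set.Ioi 0), slope F 0 t < V * p * r :=
      hslope.eventually_lt_const hVpr
    have hev2 : ∀ᶠ t in nhdsWithin 0 (Set.Ioi 0), V * p * r ≤ slope F 0 t := by
      filter_upwards [self_mem_nhdsWithin] with t ht
      rw [Set.mem_Ioi] at ht
      rw [slope_def_field, sub_zero, le_div_iff₀ ht]
      have hb := one_add_mul_self_le_rpow_one_add (le_trans (by norm_num : (-1:ℝ) ≤ 0) (mul_nonneg ht.le hrpos.le)) hp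
      have hk := hkey t ht
      rw [hF0] at *
      nlinarith [mul_le_mul_of_nonneg_left hb hV.le]
    obtain ⟨t, h1, h2⟩ := (hev.and hev2).exists
    exact absurd h1 (not_lt.2 h2)
  · -- reverse direction
    intro hmv
    have hub : ∀ t ∈ S, t ≤ 1 / V := by
      rintro t ⟨f, hfA, -, rfl⟩
      exact element_le hΩo hΩb hp hfA hV (hmv f hfA)
    rw [hSK]
    exact le_antisymm (csSup_le ⟨1 / V, honemem⟩ hub) (le_csSup ⟨1 / V, hub⟩ honemem)
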